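/- For every n ≥ 1 and every choice of digits a_1, …, a_n ≥ m, the normalized Lebesgue measure of the n-th cylinder satisfies λ_θ(C(a_1,…,a_n)) = 1/(q_n·(q_n + θ·q_{n−1})), where q_{n−1}, q_n are the convergent denominators determined by a_1, …, a_n. -/
import Mathlib


noncomputable section
open MeasureTheory Filter Set

namespace Theta

/-- θ = 1/√m -/
def th (m : ℕ) : ℝ := 1 / Real.sqrt m

/-- The θ-expansion map T_θ on [0,θ]. -/
def T (m : ℕ) (x : ℝ) : ℝ := if x = 0 then 0 else 1 / x - th m * ⌊1 / (x * th m)⌋₊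

/-- The n-th digit a_n(x) (n ≥ 1), a_n(x) = a_1(T_θ^{n-1} x) with a_1(x) = ⌊1/(xθ)⌋. -/
def a (m n : ℕ) (x : ℝ) : ℕ := ⌊1 / ((T m)^[n - 1] x * th m)⌋₊

/-- Ω: the irrationals in (0,θ). -/
def Omega (m : ℕ) : Set ℝ := {x | x ∈ Set.Ioo 0 (th m) ∧ Irrational x}

/-- Convergent numerators, shifted: `p m x (n+1)` is p_n(x), `p m x 0` is p_{-1} = 1. -/
def p (m : ℕ) (x : ℝ) : ℕ → ℝ
  | 0 => 1
  | 1 => 0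
  | n + 2 => (a m (n + 1) x) * th m * p m x (n + 1) + p m x n

/-- Convergent denominators, shifted: `q m x (n+1)` is q_n(x), `q m x 0` is q_{-1} = 0. -/
def q (m : ℕ) (x : ℝ) : ℕ → ℝ
  | 0 => 0
  | 1 => 1
  | n + 2 => (a m (n + 1) x) * th m * q m x (n + 1) + q m x n

/-- The n-th cylinder determined by the digits d 0, …, d (n-1) (standing for i_1, …, i_n). -/
def cyl (m n : ℕ) (d : ℕ → ℕ) : Set ℝ := {x | x ∈ Omega m ∧ ∀ k < n, a m (k + 1) x = d k}

/-- Convergent denominators determined by the digits d 0, …  (shifted: `qd m d (n+1)` is q_n). -/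
def qd (m : ℕ) (d : ℕ → ℕ) : ℕ → ℝ
  | 0 => 0
  | 1 => 1
  | n + 2 => (d n) * th m * qd m d (n + 1) + qd m d n

/-- Normalized Lebesgue measure on [0,θ]: λ_θ(A) = Leb(A)/θ (as a real number). -/
def lam (m : ℕ) (A : Set ℝ) : ℝ := (volume A).toReal / th m

-- auxiliary
lemma two_step {P : ℕ → Prop} (h0 : P 0) (h1 : P 1)
    (ih : ∀ n, P n → P (n + 1) → P (n + 2)) : ∀ n, P n := by
  have key : ∀ n, P n ∧ P (n + 1) := by
    intro n
    induction n with
    | zero => exact ⟨h0, h1⟩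
    | succ k hk => exact ⟨hk.2, ih k hk.1 hk.2⟩
  exact fun n => (key n).1

def pd (m : ℕ) (d : ℕ → ℕ) : ℕ → ℝ
  | 0 => 1
  | 1 => 0
  | n + 2 => (d n) * th m * pd m d (n + 1) + pd m d n

def Dset (m n : ℕ) (d : ℕ → ℕ) : Set ℝ :=
  {x | x ∈ Set.Ioo 0 (th m) ∧ ∀ k < n, a m (k + 1) x = d k}

def U (m : ℕ) (d : ℕ → ℕ) (n : ℕ) : ℝ := pd m d (n + 1) / qd m d (n + 1)
def V (m : ℕ) (d : ℕ → ℕ) (n : ℕ) : ℝ :=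
  (pd m d (n + 1) + th m * pd m d n) / (qd m d (n + 1) + th m * qd m d n)

section Numeric
variable {m : ℕ} (hm : 2 ≤ m)
include hm

lemma th_pos : 0 < th m := by
  have : (0:ℝ) < m := by exact_mod_cast (by omega : 0 < m)
  exact div_pos one_pos (Real.sqrt_pos.mpr this)

lemma th_mul_th : th m * th m = 1 / m := by
  have h0 : (0:ℝ) ≤ m := by positivity
  have h : Real.sqrt m * Real.sqrt m = m := Real.mul_self_sqrt h0
  have hs : Real.sqrt m ≠ 0 := by
    have : (0:ℝ) < m := by exact_mod_cast (by omega : 0 < m)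
    exact ne_of_gt (Real.sqrt_pos.mpr this)
  rw [th, div_mul_div_comm, one_mul, h]

lemma m_mul_th : (m : ℝ) * th m = Real.sqrt m := by
  have h0 : (0:ℝ) ≤ m := by positivity
  rw [th, mul_one_div, ← Real.sqrt_mul_self h0]
  rw [Real.sqrt_mul_self h0, Real.div_sqrt]

lemma one_le_digit_mul_th {i : ℕ} (hi : m ≤ i) : 1 ≤ (i : ℝ) * th m := by
  have h1 : (1:ℝ) ≤ Real.sqrt m := by
    rw [show (1:ℝ) = Real.sqrt 1 by simp]
    exact Real.sqrt_le_sqrt (by exact_mod_cast (by omega : 1 ≤ m))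
  have h2 : (m:ℝ) * th m ≤ (i:ℝ) * th m :=
    mul_le_mul_of_nonneg_right (by exact_mod_cast hi) (th_pos hm).le
  rw [m_mul_th hm] at h2; linarith

lemma th_le_digit_mul_th_mul_th {i : ℕ} (hi : m ≤ i) :
    th m ≤ ((i : ℝ) * th m) * th m := by
  nlinarith [one_le_digit_mul_th hm hi, th_pos hm]

end Numeric
section Rec
variable {m : ℕ} {d : ℕ → ℕ} (hm : 2 ≤ m) (hd : ∀ j, m ≤ d j)
include hm hd

lemma qd_nonneg : ∀ k, 0 ≤ qd m d k := by
  apply two_step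
  · simp [qd]
  · simp [qd]
  · intro n h1 h2
    show 0 ≤ (d n : ℝ) * th m * qd m d (n + 1) + qd m d n
    have := one_le_digit_mul_th hm (hd n)
    nlinarith

lemma pd_nonneg : ∀ k, 0 ≤ pd m d k := by
  apply two_step
  · simp [pd]
  · simp [pd]
  · intro n h1 h2
    show 0 ≤ (d n : ℝ) * th m * pd m d (n + 1) + pd m d n
    have := one_le_digit_mul_th hm (hd n)
    nlinarith

lemma qd_one_le : ∀ k, 1 ≤ qd m d (k + 1) := by
  have step : ∀ k, qd m d k ≤ qd m d (k + 1) := by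
    intro k
    match k with
    | 0 => simp [qd]
    | k + 1 =>
      show qd m d (k + 1) ≤ (d k : ℝ) * th m * qd m d (k + 1) + qd m d k
      have h1 := one_le_digit_mul_th hm (hd k)
      have h2 := qd_nonneg hm hd k
      have h3 := qd_nonneg hm hd (k + 1)
      nlinarith
  intro k
  induction k with
  | zero => simp [qd]
  | succ j hj => exact le_trans hj (step (j + 1))

lemma qd_pos : ∀ k, 0 < qd m d (k + 1) := fun k => lt_of_lt_of_le one_pos (qd_one_le hm hd k)

lemma pd_le_th_qd : ∀ k, pd m d (k + 1) ≤ th m * qd m d (k + 1) := by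
  apply two_step
  · simp [pd, qd]; exact (th_pos hm).le
  · show pd m d 2 ≤ th m * qd m d 2
    have h1 : pd m d 2 = 1 := by simp [pd]
    have h2 : qd m d 2 = (d 0 : ℝ) * th m := by simp [qd]
    rw [h1, h2]
    have e : th m * ((d 0 : ℝ) * th m) = (d 0 : ℝ) / m := by
      rw [show th m * ((d 0 : ℝ) * th m) = (d 0 : ℝ) * (th m * th m) by ring, th_mul_th hm]
      ring
    rw [e, le_div_iff₀ (by exact_mod_cast (by omega : 0 < m) : (0:ℝ) < m)]
    exact_mod_cast Nat.one_mul m ▸ (by exact_mod_cast hd 0 : (m:ℝ) ≤ d 0)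
  · intro n h1 h2
    show (d (n + 1) : ℝ) * th m * pd m d (n + 2) + pd m d (n + 1) ≤
      th m * ((d (n + 1) : ℝ) * th m * qd m d (n + 2) + qd m d (n + 1))
    have h3 := one_le_digit_mul_th hm (hd (n + 1))
    have h4 := th_pos hm
    nlinarith

lemma U_nonneg (n : ℕ) : 0 ≤ U m d n :=
  div_nonneg (pd_nonneg hm hd _) (qd_nonneg hm hd _)

lemma V_nonneg (n : ℕ) : 0 ≤ V m d n := by
  apply div_nonneg
  · have := pd_nonneg hm hd (n + 1); have := pd_nonneg hm hd n
    have := (th_pos hm).le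
    positivity
  · have := qd_nonneg hm hd (n + 1); have := qd_nonneg hm hd n
    have := (th_pos hm).le
    positivity

lemma pd_shift : ∀ n, pd m d (n + 1) = qd m (fun k => d (k + 1)) n := by
  apply two_step
  · simp [pd, qd]
  · simp [pd, qd]
  · intro n h1 h2
    show (d (n + 1) : ℝ) * th m * pd m d (n + 2) + pd m d (n + 1) = _
    rw [h1, h2]
    rfl

lemma qd_shift : ∀ n, qd m d (n + 1) =
    (d 0 : ℝ) * th m * qd m (fun k => d (k + 1)) n + pd m (fun k => d (k + 1)) n := by
  apply two_step
  · simp [pd, qd]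
  · show qd m d 2 = _
    simp [pd, qd]
  · intro n h1 h2
    show (d (n + 1) : ℝ) * th m * qd m d (n + 2) + qd m d (n + 1) = _
    rw [h1, h2]
    show _ = (d 0 : ℝ) * th m * ((d (n+1) : ℝ) * th m * qd m (fun k => d (k+1)) (n+1) + qd m (fun k => d (k+1)) n)
        + ((d (n+1) : ℝ) * th m * pd m (fun k => d (k+1)) (n+1) + pd m (fun k => d (k+1)) n)
    ring

lemma det : ∀ n, pd m d n * qd m d (n + 1) - pd m d (n + 1) * qd m d n = (-1 : ℝ) ^ n := by
  intro n
  induction n with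
  | zero => simp [pd, qd]
  | succ k hk =>
    show pd m d (k+1) * ((d k : ℝ) * th m * qd m d (k + 1) + qd m d k)
        - ((d k : ℝ) * th m * pd m d (k + 1) + pd m d k) * qd m d (k+1) = _
    rw [pow_succ]
    nlinarith [hk]

lemma V_sub_U (n : ℕ) : V m d n - U m d n =
    th m * (-1 : ℝ) ^ n / (qd m d (n + 1) * (qd m d (n + 1) + th m * qd m d n)) := by
  have hq1 : 0 < qd m d (n + 1) := qd_pos hm hd n
  have hq0 : 0 ≤ qd m d n := qd_nonneg hm hd n
  have hq2 : 0 < qd m d (n + 1) + th m * qd m d n := by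
    have := (th_pos hm); nlinarith
  rw [U, V, div_sub_div _ _ (ne_of_gt hq2) (ne_of_gt hq1), div_eq_div_iff (by positivity) (by positivity)]
  have hdet := det hm hd n
  linear_combination (th m * (qd m d (n + 1) * (qd m d (n + 1) + th m * qd m d n))) * hdet
end Rec
section Helpers
variable {m : ℕ}

lemma a_succ (k : ℕ) (x : ℝ) : a m (k + 2) x = a m (k + 1) (T m x) := by
  simp [a, Function.iterate_succ_apply]

lemma a_one_zero : a m 1 (0:ℝ) = 0 := by simp [a]

lemma one_le_digit_mul_th_sq (hm : 2 ≤ m) {i : ℕ} (hi : m ≤ i) :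
    1 ≤ (i : ℝ) * th m * th m := by
  have e : (i : ℝ) * th m * th m = (i : ℝ) / m := by
    rw [mul_assoc, th_mul_th hm]; ring
  rw [e, le_div_iff₀ (by exact_mod_cast (by omega : 0 < m) : (0:ℝ) < m), one_mul]
  exact_mod_cast hi

lemma a_one_eq_iff (hm : 2 ≤ m) {x : ℝ} (hx : 0 < x) {i : ℕ} (hi : m ≤ i) :
    a m 1 x = i ↔ ((i : ℝ) * th m) * x ≤ 1 ∧ 1 < ((i : ℝ) * th m + th m) * x := by
  have hθ := th_pos hm
  have hxθ : 0 < x * th m := by positivity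
  have h0 : 0 ≤ 1 / (x * th m) := by positivity
  rw [show a m 1 x = ⌊1 / (x * th m)⌋₊ from by simp [a], Nat.floor_eq_iff h0,
    le_div_iff₀ hxθ, div_lt_iff₀ hxθ]
  constructor
  · rintro ⟨h1, h2⟩; exact ⟨by nlinarith, by nlinarith⟩
  · rintro ⟨h1, h2⟩; exact ⟨by nlinarith, by nlinarith⟩

lemma T_val {x : ℝ} (hx : x ≠ 0) {i : ℕ} (ha : a m 1 x = i) :
    T m x = 1 / x - (i : ℝ) * th m := by
  have h : (⌊1 / (x * th m)⌋₊ : ℝ) = (i : ℝ) := by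
    exact_mod_cast congrArg (Nat.cast (R := ℝ)) (by simpa [a] using ha)
  simp only [T, if_neg hx, h]
  ring

end Helpers
set_option maxHeartbeats 1000000 in
lemma sandwich {m : ℕ} (hm : 2 ≤ m) :
    ∀ n, 1 ≤ n → ∀ d : ℕ → ℕ, (∀ j, m ≤ d j) →
      Ioo (min (U m d n) (V m d n)) (max (U m d n) (V m d n)) ⊆ Dset m n d ∧
      Dset m n d ⊆ Icc (min (U m d n) (V m d n)) (max (U m d n) (V m d n)) := by
  have hθ := th_pos hm
  intro n hn
  induction n, hn using Nat.le_induction with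
  | base =>
    intro d hd
    set c : ℝ := (d 0 : ℝ) * th m with hcdef
    have hc1 : 1 ≤ c := one_le_digit_mul_th hm (hd 0)
    have hcθ : 1 ≤ c * th m := by
      have := one_le_digit_mul_th_sq hm (hd 0); rw [← hcdef] at this; linarith [this]
    have hpd1 : pd m d 1 = 0 := rfl
    have hqd1 : qd m d 1 = 1 := rfl
    have hpd2 : pd m d 2 = 1 := by
      show (d 0 : ℝ) * th m * pd m d 1 + pd m d 0 = 1
      rw [hpd1]; show _ + (1:ℝ) = 1; ring
    have hqd2 : qd m d 2 = c := by
      show (d 0 : ℝ) * th m * qd m d 1 + qd m d 0 = c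
      rw [hqd1]; show _ * 1 + (0:ℝ) = c; rw [hcdef]; ring
    have hU : U m d 1 = 1 / c := by rw [U, hpd2, hqd2]
    have hV : V m d 1 = 1 / (c + th m) := by
      rw [V, hpd2, hqd2, hpd1, hqd1]; norm_num
    have hVU : V m d 1 ≤ U m d 1 := by
      rw [hU, hV]
      apply one_div_le_one_div_of_le (by linarith) (by linarith)
    rw [min_eq_right hVU, max_eq_left hVU, hU, hV]
    constructor
    · rintro x ⟨hx1, hx2⟩
      have hx0 : 0 < x := lt_trans (by positivity) hx1
      have hxc : x * c < 1 := by
        have := (lt_div_iff₀ (by linarith : (0:ℝ) < c)).mp hx2; linarith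
      have hxcθ : 1 < x * (c + th m) := by
        have := (div_lt_iff₀ (by linarith : (0:ℝ) < c + th m)).mp hx1; linarith
      refine ⟨⟨hx0, ?_⟩, ?_⟩
      · nlinarith
      · intro k hk
        interval_cases k
        rw [a_one_eq_iff hm hx0 (hd 0), ← hcdef]
        constructor
        · nlinarith
        · nlinarith
    · rintro x ⟨⟨hx0, hxθ⟩, hxd⟩
      have ha0 := hxd 0 (by omega)
      rw [a_one_eq_iff hm hx0 (hd 0), ← hcdef] at ha0
      obtain ⟨h1, h2⟩ := ha0
      constructor
      · rw [div_le_iff₀ (by linarith : (0:ℝ) < c + th m)]; nlinarith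
      · rw [le_div_iff₀ (by linarith : (0:ℝ) < c)]; nlinarith
  | succ n hn IH =>
    intro d hd
    have hd' : ∀ j, m ≤ (fun k => d (k + 1)) j := fun j => hd (j + 1)
    obtain ⟨hlow, hupp⟩ := IH (fun k => d (k + 1)) hd'
    set d' : ℕ → ℕ := fun k => d (k + 1) with hd'def
    set c : ℝ := (d 0 : ℝ) * th m with hcdef
    have hc1 : 1 ≤ c := one_le_digit_mul_th hm (hd 0)
    have hcθ : 1 ≤ c * th m := by
      have := one_le_digit_mul_th_sq hm (hd 0); rw [← hcdef] at this; linarith [this]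
    set u' : ℝ := U m d' n with hu'def
    set v' : ℝ := V m d' n with hv'def
    have hu'0 : 0 ≤ u' := U_nonneg hm hd' n
    have hv'0 : 0 ≤ v' := V_nonneg hm hd' n
    set α : ℝ := min u' v' with hαdef
    set β : ℝ := max u' v' with hβdef
    have hα0 : 0 ≤ α := le_min hu'0 hv'0
    have hβ0 : 0 ≤ β := le_trans hα0 min_le_max
    have hαβ : α ≤ β := min_le_max
    -- endpoint identities
    have hA : 0 < qd m d' (n + 1) := qd_pos hm hd' n
    have hB : 0 ≤ pd m d' (n + 1) := pd_nonneg hm hd' (n + 1)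
    have hA0 : 0 ≤ qd m d' n := qd_nonneg hm hd' n
    have hB0 : 0 ≤ pd m d' n := pd_nonneg hm hd' n
    have hA2 : 0 < qd m d' (n + 1) + th m * qd m d' n := by nlinarith
    have hB2 : 0 ≤ pd m d' (n + 1) + th m * pd m d' n := by nlinarith
    have hUeq : U m d (n + 1) = 1 / (u' + c) := by
      have h2 : c * qd m d' (n + 1) + pd m d' (n + 1) ≠ 0 := by nlinarith
      rw [U, pd_shift hm hd (n + 1), qd_shift hm hd (n + 1), hu'def, U, ← hd'def, ← hcdef]
      field_simp
      try ring
      try exact Or.inl trivial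
    have hVeq : V m d (n + 1) = 1 / (v' + c) := by
      have h2 : c * qd m d' (n + 1) + pd m d' (n + 1) + th m * (c * qd m d' n + pd m d' n) ≠ 0 := by
        nlinarith
      rw [V, pd_shift hm hd (n + 1), pd_shift hm hd n, qd_shift hm hd (n + 1),
        qd_shift hm hd n, hv'def, V, ← hd'def, ← hcdef]
      field_simp
      try ring
      try exact Or.inl trivial
    have hanti : ∀ s t : ℝ, 0 ≤ s → s ≤ t → 1 / (t + c) ≤ 1 / (s + c) :=
      fun s t hs hst => one_div_le_one_div_of_le (by linarith) (by linarith)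
    have hminmax : min (U m d (n + 1)) (V m d (n + 1)) = 1 / (β + c) ∧
        max (U m d (n + 1)) (V m d (n + 1)) = 1 / (α + c) := by
      rw [hUeq, hVeq]
      rcases le_total u' v' with h | h
      · rw [hαdef, hβdef, min_eq_left h, max_eq_right h,
          min_eq_right (hanti u' v' hu'0 h), max_eq_left (hanti u' v' hu'0 h)]
        exact ⟨rfl, rfl⟩
      · rw [hαdef, hβdef, min_eq_right h, max_eq_left h,
          min_eq_left (hanti v' u' hv'0 h), max_eq_right (hanti v' u' hv'0 h)]
        exact ⟨rfl, rfl⟩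
    rw [hminmax.1, hminmax.2]
    have hβc : 0 < β + c := by linarith
    have hαc : 0 < α + c := by linarith
    constructor
    · rintro x ⟨hx1, hx2⟩
      have hx0 : 0 < x := lt_trans (by positivity) hx1
      have hxinv : x * (1 / x) = 1 := by field_simp
      -- bounds on t
      set t : ℝ := 1 / x - c with htdef
      have htc : t + c = 1 / x := by rw [htdef]; ring
      have hxt : x * (t + c) = 1 := by rw [htc]; exact hxinv
      have hαt : α < t := by
        have h1 : x * (α + c) < 1 := (lt_div_iff₀ hαc).mp hx2
        nlinarith
      have htβ : t < β := by
        have h1 : 1 < x * (β + c) := (div_lt_iff₀ hβc).mp hx1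
        nlinarith
      have htD : t ∈ Dset m n d' := hlow ⟨hαt, htβ⟩
      obtain ⟨⟨ht0, htθ⟩, htd⟩ := htD
      have ha0 : a m 1 x = d 0 := by
        rw [a_one_eq_iff hm hx0 (hd 0), ← hcdef]
        constructor
        · nlinarith
        · nlinarith
      have hT : T m x = t := by
        rw [T_val (ne_of_gt hx0) ha0, ← hcdef, htdef]
      refine ⟨⟨hx0, ?_⟩, ?_⟩
      · nlinarith
      · intro k hk
        match k with
        | 0 => exact ha0
        | j + 1 =>
          rw [a_succ, hT]
          exact htd j (by omega)
    · rintro x ⟨⟨hx0, hxθ⟩, hxd⟩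
      have hxinv : x * (1 / x) = 1 := by field_simp
      have ha0 := hxd 0 (by omega)
      rw [a_one_eq_iff hm hx0 (hd 0), ← hcdef] at ha0
      obtain ⟨h1, h2⟩ := ha0
      set t : ℝ := 1 / x - c with htdef
      have htc : t + c = 1 / x := by rw [htdef]; ring
      have hxt : x * (t + c) = 1 := by rw [htc]; exact hxinv
      have ht0 : 0 ≤ t := by nlinarith
      have htθ : t < th m := by nlinarith
      have hT : T m x = t := by
        rw [T_val (ne_of_gt hx0) (hxd 0 (by omega)), ← hcdef, htdef]
      have hdig : ∀ k < n, a m (k + 1) t = d' k := by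
        intro k hk
        have := hxd (k + 1) (by omega)
        rw [a_succ, hT] at this
        exact this
      have ht0' : 0 < t := by
        rcases eq_or_lt_of_le ht0 with he | h
        · exfalso
          have h1 := hdig 0 hn
          rw [← he, a_one_zero] at h1
          have := hd' 0
          omega
        · exact h
      have htI : t ∈ Icc α β := hupp ⟨⟨ht0', htθ⟩, hdig⟩
      constructor
      · rw [div_le_iff₀ hβc]; nlinarith [htI.2]
      · rw [le_div_iff₀ hαc]; nlinarith [htI.1]
lemma qd_congr {m : ℕ} {d e : ℕ → ℕ} {n : ℕ} (h : ∀ j < n, d j = e j) :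
    ∀ k, k ≤ n + 1 → qd m d k = qd m e k := by
  apply two_step
  · intro _; rfl
  · intro _; rfl
  · intro k h1 h2 hk
    show (d k : ℝ) * th m * qd m d (k + 1) + qd m d k = (e k : ℝ) * th m * qd m e (k + 1) + qd m e k
    rw [h k (by omega), h1 (by omega), h2 (by omega)]

/-- λ_θ(C(a_1,…,a_n)) = 1/(q_n(q_n + θ q_{n-1})). -/
theorem stmt_4 (m : ℕ) (hm : 2 ≤ m) (n : ℕ) (hn : 1 ≤ n) (d : ℕ → ℕ)
    (hd : ∀ k < n, m ≤ d k) :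
    lam m (cyl m n d) = 1 / (qd m d (n + 1) * (qd m d (n + 1) + th m * qd m d n)) := by
  have hθ := th_pos hm
  set e : ℕ → ℕ := fun k => if k < n then d k else m with hedef
  have he : ∀ j, m ≤ e j := by
    intro j
    by_cases h : j < n
    · simpa [hedef, h] using hd j h
    · simp [hedef, h]
  have hagree : ∀ j < n, d j = e j := by intro j hj; simp [hedef, hj]
  obtain ⟨hlow, hupp⟩ := sandwich hm n hn e he
  have hq1 : qd m d (n + 1) = qd m e (n + 1) := qd_congr hagree (n + 1) le_rfl
  have hq0 : qd m d n = qd m e n := qd_congr hagree n (by omega)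
  have hcyl : cyl m n d = Dset m n e ∩ {x | Irrational x} := by
    ext x
    simp only [cyl, Dset, Omega, mem_setOf_eq, mem_inter_iff, mem_Ioo]
    constructor
    · rintro ⟨⟨h1, h2⟩, h3⟩
      exact ⟨⟨h1, fun k hk => by rw [← hagree k hk]; exact h3 k hk⟩, h2⟩
    · rintro ⟨⟨h1, h3⟩, h2⟩
      exact ⟨⟨h1, h2⟩, fun k hk => by rw [hagree k hk]; exact h3 k hk⟩
  set α : ℝ := min (U m e n) (V m e n) with hαdef
  set β : ℝ := max (U m e n) (V m e n) with hβdef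
  have hαβ : α ≤ β := min_le_max
  have hqp : 0 < qd m e (n + 1) := qd_pos hm he n
  have hq0' : 0 ≤ qd m e n := qd_nonneg hm he n
  have hden : 0 < qd m e (n + 1) * (qd m e (n + 1) + th m * qd m e n) :=
    mul_pos hqp (by nlinarith)
  have hΔ : β - α = th m / (qd m e (n + 1) * (qd m e (n + 1) + th m * qd m e n)) := by
    have h := V_sub_U hm he n
    have habs : β - α = |V m e n - U m e n| := max_sub_min_eq_abs (U m e n) (V m e n)
    rw [habs, h, abs_div, abs_of_pos hden]
    congr 1
    rw [abs_mul, abs_pow, abs_neg, abs_one, one_pow, mul_one, abs_of_pos hθ]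
  have hv1 : volume (cyl m n d) ≤ ENNReal.ofReal (β - α) := by
    rw [hcyl, ← Real.volume_Icc]
    exact measure_mono (fun x hx => hupp hx.1)
  have hv2 : ENNReal.ofReal (β - α) ≤ volume (cyl m n d) := by
    rw [← Real.volume_Ioo]
    calc volume (Ioo α β) = volume (Ioo α β \ range ((↑) : ℚ → ℝ)) :=
          (measure_diff_null ((Set.countable_range _).measure_zero _)).symm
      _ ≤ volume (cyl m n d) := by
          apply measure_mono
          intro x hx
          rw [hcyl]
          exact ⟨hlow hx.1, hx.2⟩
  have hvol : volume (cyl m n d) = ENNReal.ofReal (β - α) := le_antisymm hv1 hv2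
  rw [lam, hvol, ENNReal.toReal_ofReal (by linarith : (0:ℝ) ≤ β - α), hΔ, hq1, hq0,
    div_right_comm, div_self (ne_of_gt hθ)]
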